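/- For a < 1, consider on the simplex S = {(x₁,…,xₙ) : xᵢ ≥ 0, Σxᵢ ≤ 1} the convex function h(x) = max(1 - (x₁+⋯+xₙ)/a, 0). Then the L^p norm of h on S equals a^{n/p}·C₁ and the integral of h over the boundary faces {xᵢ = 0} equals a^{n-1}·C₂, for constants C₁, C₂ > 0 depending only on n and p. In particular, for n > 2 and p = 2 there is no constant C with ‖h‖_{L²(S)} ≤ C ∫_{∂S} h dσ uniformly in a. -/

import Mathlib

/-
On the cone `{x | ∀ i, 0 ≤ xᵢ}` the function `h_a x = max (1 - (∑ xᵢ) / a) 0` is `h_1 (a⁻¹ • x)`,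
and for `a ≤ 1` it vanishes off the simplex `S`; hence its integral over `S` against any additive
Haar measure on a `d`-dimensional space scales like `a ^ d`. Lebesgue measure on `ℝⁿ` gives the
factor `a ^ n` in the `L^p` integral. Each face `S ∩ {xⱼ = 0}` is an isometric copy of the
`(n-1)`-dimensional simplex, on which `μH[n-1]` is an additive Haar measure, so the boundary
integral scales like `a ^ (n-1)`. For `p = 2` and `n > 2` the exponent `n / 2` of the left side is
smaller than `n - 1`, which rules out a uniform constant as `a → 0`.
-/

open MeasureTheory Set Filter Topology Module
open scoped Pointwise

noncomputable def tent (a t : ℝ) : ℝ := max (1 - t / a) 0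

lemma tent_pos {a t : ℝ} (ha : 0 < a) (h : t < a) : 0 < tent a t :=
  lt_max_of_lt_left (by rw [sub_pos, div_lt_one ha]; exact h)

lemma tent_nonneg (a t : ℝ) : 0 ≤ tent a t := le_max_right _ _

lemma tent_eq_zero_of_le {a t : ℝ} (ha : 0 < a) (h : a ≤ t) : tent a t = 0 :=
  max_eq_right (by rw [sub_nonpos, le_div_iff₀ ha, one_mul]; exact h)

lemma tent_one_inv_mul (a t : ℝ) : tent 1 (a⁻¹ * t) = tent a t := by
  rw [tent, tent, div_one, inv_mul_eq_div]

lemma continuous_tent (a : ℝ) : Continuous (tent a) :=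
  (continuous_const.sub (continuous_id.div_const a)).max continuous_const

section Scaling

variable {E : Type*} [NormedAddCommGroup E] [NormedSpace ℝ E] [MeasurableSpace E] [BorelSpace E]
  [FiniteDimensional ℝ E] (μ : Measure E) [μ.IsAddHaarMeasure]

lemma setIntegral_comp_inv_smul_of_smul_eq {K : Set E} (hK : ∀ c : ℝ, 0 < c → c • K = K)
    (f : E → ℝ) {a : ℝ} (ha : 0 < a) :
    ∫ x in K, f (a⁻¹ • x) ∂μ = a ^ finrank ℝ E * ∫ x in K, f x ∂μ := by
  rw [μ.setIntegral_comp_smul_of_pos f K (inv_pos.2 ha), hK _ (inv_pos.2 ha), inv_pow, inv_inv,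
    smul_eq_mul]

theorem setIntegral_tent_comp_eq_pow_mul {K : Set E} (hKm : MeasurableSet K)
    (hK : ∀ c : ℝ, 0 < c → c • K = K) {ℓ : E → ℝ} (hℓ : ∀ c : ℝ, 0 < c → ∀ x, ℓ (c • x) = c * ℓ x)
    {φ : ℝ → ℝ} (hφ : φ 0 = 0) {a : ℝ} (ha : 0 < a) (ha1 : a ≤ 1) :
    ∫ x in K ∩ {x | ℓ x ≤ 1}, φ (tent a (ℓ x)) ∂μ
      = a ^ finrank ℝ E * ∫ x in K ∩ {x | ℓ x ≤ 1}, φ (tent 1 (ℓ x)) ∂μ := by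
  have drop_cut : ∀ b, 0 < b → b ≤ 1 →
      ∫ x in K ∩ {x | ℓ x ≤ 1}, φ (tent b (ℓ x)) ∂μ = ∫ x in K, φ (tent b (ℓ x)) ∂μ := by
    refine fun b hb hb1 => (setIntegral_eq_of_subset_of_forall_sdiff_eq_zero hKm
      inter_subset_left fun x hx => ?_).symm
    have hx1 : 1 < ℓ x := not_le.1 fun h => hx.2 ⟨hx.1, h⟩
    rw [tent_eq_zero_of_le hb (by linarith), hφ]
  rw [drop_cut a ha ha1, drop_cut 1 one_pos le_rfl,
    ← setIntegral_comp_inv_smul_of_smul_eq μ hK _ ha]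
  simp only [hℓ _ (inv_pos.2 ha), tent_one_inv_mul]

end Scaling

def solidSimplex (n : ℕ) : Set (EuclideanSpace ℝ (Fin n)) := {x | (∀ i, 0 ≤ x i) ∧ ∑ i, x i ≤ 1}

section Simplex

variable {n : ℕ}

lemma continuous_sum_coord : Continuous fun x : EuclideanSpace ℝ (Fin n) => ∑ i, x i := by
  fun_prop

lemma isClosed_orthant : IsClosed {x : EuclideanSpace ℝ (Fin n) | ∀ i, 0 ≤ x i} := by
  simp only [ofPred_forall]
  exact isClosed_iInter fun i => isClosed_le continuous_const (by fun_prop)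

lemma smul_orthant {c : ℝ} (hc : 0 < c) :
    c • {x : EuclideanSpace ℝ (Fin n) | ∀ i, 0 ≤ x i} = {x | ∀ i, 0 ≤ x i} := by
  ext x
  simp [mem_smul_set_iff_inv_smul_mem₀ hc.ne', hc]

lemma isCompact_solidSimplex : IsCompact (solidSimplex n) := by
  have hbox : IsCompact (WithLp.toLp 2 '' univ.pi fun _ : Fin n => Icc (0 : ℝ) 1) :=
    (isCompact_univ_pi fun _ => isCompact_Icc).image (PiLp.continuous_toLp 2 _)
  refine hbox.of_isClosed_subset (isClosed_orthant.inter (isClosed_le continuous_sum_coord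
    continuous_const)) fun x ⟨hx0, hx1⟩ => ⟨WithLp.ofLp x, fun i _ => ⟨hx0 i, ?_⟩, rfl⟩
  exact (Finset.single_le_sum (fun i _ => hx0 i) (Finset.mem_univ i)).trans hx1

variable (μ : Measure (EuclideanSpace ℝ (Fin n))) [μ.IsAddHaarMeasure]

theorem setIntegral_solidSimplex_tent {φ : ℝ → ℝ} (hφ : φ 0 = 0) {a : ℝ} (ha : 0 < a)
    (ha1 : a ≤ 1) :
    ∫ x in solidSimplex n, φ (tent a (∑ i, x i)) ∂μ
      = a ^ n * ∫ x in solidSimplex n, φ (tent 1 (∑ i, x i)) ∂μ := by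
  have h := setIntegral_tent_comp_eq_pow_mul μ isClosed_orthant.measurableSet
    (fun c hc => smul_orthant hc) (ℓ := fun x => ∑ i, x i)
    (fun c _ x => by simp [Finset.mul_sum]) hφ ha ha1
  rwa [finrank_euclideanSpace_fin] at h

theorem setIntegral_solidSimplex_tent_rpow_pos {p : ℝ} (hp : 0 ≤ p) :
    0 < ∫ x in solidSimplex n, tent 1 (∑ i, x i) ^ p ∂μ := by
  have hcont : Continuous fun x : EuclideanSpace ℝ (Fin n) => tent 1 (∑ i, x i) ^ p :=
    ((continuous_tent 1).comp continuous_sum_coord).rpow_const fun _ => Or.inr hp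
  rw [setIntegral_pos_iff_support_of_nonneg_ae
    (ae_of_all _ fun x => Real.rpow_nonneg (tent_nonneg 1 _) p)
    (hcont.continuousOn.integrableOn_compact isCompact_solidSimplex)]
  set V : Set (EuclideanSpace ℝ (Fin n)) := {x | (∀ i, 0 < x i) ∧ ∑ i, x i < 1}
  have hV : IsOpen V := by
    simp only [V, ofPred_and, ofPred_forall]
    exact (isOpen_iInter_of_finite fun i => isOpen_lt continuous_const (by fun_prop)).inter
      (isOpen_lt continuous_sum_coord continuous_const)
  have hV_ne : V.Nonempty := by
    refine ⟨WithLp.toLp 2 fun _ => 1 / (n + 1), fun _ => by simp; positivity, ?_⟩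
    simp only [Finset.sum_const, Finset.card_univ, Fintype.card_fin, nsmul_eq_mul]
    rw [mul_one_div, div_lt_one (by positivity)]
    linarith
  calc 0 < μ V := hV.measure_pos μ hV_ne
    _ ≤ _ := by
      refine measure_mono fun x hx => ⟨?_, fun i => (hx.1 i).le, hx.2.le⟩
      exact (Real.rpow_pos_of_pos (tent_pos one_pos hx.2) p).ne'

end Simplex

section Faces

variable {m : ℕ}

def insertZero (j : Fin (m + 1)) (y : EuclideanSpace ℝ (Fin m)) : EuclideanSpace ℝ (Fin (m + 1)) :=
  WithLp.toLp 2 (j.insertNth 0 (WithLp.ofLp y))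

@[simp]
lemma insertZero_apply_self (j : Fin (m + 1)) (y : EuclideanSpace ℝ (Fin m)) :
    insertZero j y j = 0 :=
  Fin.insertNth_apply_same (α := fun _ => ℝ) j 0 y

@[simp]
lemma insertZero_apply_succAbove (j : Fin (m + 1)) (y : EuclideanSpace ℝ (Fin m)) (k : Fin m) :
    insertZero j y (j.succAbove k) = y k :=
  Fin.insertNth_apply_succAbove (α := fun _ => ℝ) j 0 y k

lemma isometry_insertZero (j : Fin (m + 1)) : Isometry (insertZero j) := by
  refine Isometry.of_dist_eq fun x y => ?_
  simp [EuclideanSpace.dist_eq, Fin.sum_univ_succAbove _ j]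

@[simp]
lemma sum_insertZero (j : Fin (m + 1)) (y : EuclideanSpace ℝ (Fin m)) :
    ∑ i, insertZero j y i = ∑ k, y k := by
  simp [Fin.sum_univ_succAbove _ j]

lemma setOf_apply_eq_zero_subset_range (j : Fin (m + 1)) :
    {x : EuclideanSpace ℝ (Fin (m + 1)) | x j = 0} ⊆ range (insertZero j) := fun x hx =>
  ⟨WithLp.toLp 2 (j.removeNth (WithLp.ofLp x)), by
    rw [insertZero, WithLp.ofLp_toLp, ← hx, Fin.insertNth_self_removeNth, WithLp.toLp_ofLp]⟩

lemma insertZero_preimage_face (j : Fin (m + 1)) :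
    insertZero j ⁻¹' (solidSimplex (m + 1) ∩ {x | x j = 0}) = solidSimplex m := by
  ext y
  simp [solidSimplex, Fin.forall_iff_succAbove j]

theorem setIntegral_face_eq (j : Fin (m + 1)) (f : EuclideanSpace ℝ (Fin (m + 1)) → ℝ) :
    ∫ x in solidSimplex (m + 1) ∩ {x | x j = 0}, f x ∂μH[(m : ℝ)]
      = ∫ y in solidSimplex m, f (insertZero j y) ∂μH[(m : ℝ)] := by
  have hF : solidSimplex (m + 1) ∩ {x | x j = 0} ⊆ range (insertZero j) :=
    inter_subset_right.trans (setOf_apply_eq_zero_subset_range j)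
  rw [← Measure.restrict_restrict_of_subset hF,
    ← (isometry_insertZero j).map_hausdorffMeasure (Or.inl m.cast_nonneg),
    (isometry_insertZero j).isClosedEmbedding.measurableEmbedding.setIntegral_map,
    insertZero_preimage_face]

end Faces

theorem rpow_inv_setIntegral_solidSimplex_tent {n : ℕ} {p : ℝ} (hp : 0 < p) {a : ℝ} (ha : 0 < a)
    (ha1 : a ≤ 1) :
    (∫ x in solidSimplex n, tent a (∑ i, x i) ^ p) ^ (1 / p)
      = a ^ ((n : ℝ) / p) * (∫ x in solidSimplex n, tent 1 (∑ i, x i) ^ p) ^ (1 / p) := by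
  rw [setIntegral_solidSimplex_tent volume (φ := (· ^ p)) (Real.zero_rpow hp.ne') ha ha1,
    Real.mul_rpow (by positivity)
      (setIntegral_nonneg_of_ae (ae_of_all _ fun x => Real.rpow_nonneg (tent_nonneg 1 _) p)),
    ← Real.rpow_natCast, ← Real.rpow_mul ha.le, mul_one_div]

theorem sum_setIntegral_faces_tent {m : ℕ} {a : ℝ} (ha : 0 < a) (ha1 : a ≤ 1) :
    ∑ j : Fin (m + 1), ∫ x in solidSimplex (m + 1) ∩ {x | x j = 0}, tent a (∑ i, x i) ∂μH[(m : ℝ)]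
      = a ^ m * ((m + 1) * ∫ y in solidSimplex m, tent 1 (∑ i, y i) ∂μH[(m : ℝ)]) := by
  simp only [setIntegral_face_eq, sum_insertZero, Finset.sum_const, Finset.card_univ,
    Fintype.card_fin, nsmul_eq_mul]
  rw [setIntegral_solidSimplex_tent μH[(m : ℝ)] (φ := fun t => t) rfl ha ha1]
  push_cast
  ring

lemma not_forall_rpow_mul_le_of_lt {α β c₁ c₂ C : ℝ} (hc₁ : 0 < c₁) (hαβ : α < β) :
    ¬ ∀ a : ℝ, 0 < a → a < 1 → a ^ α * c₁ ≤ C * (a ^ β * c₂) := by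
  intro h
  have hγ : 0 < β - α := sub_pos.2 hαβ
  have hlim : Tendsto (fun a : ℝ => C * c₂ * a ^ (β - α)) (𝓝[>] 0) (𝓝 0) := by
    have := ((Real.continuousAt_rpow_const 0 (β - α) (Or.inr hγ.le)).tendsto).const_mul (C * c₂)
    rw [Real.zero_rpow hγ.ne', mul_zero] at this
    exact this.mono_left nhdsWithin_le_nhds
  have hle : ∀ᶠ a in 𝓝[>] 0, c₁ ≤ C * c₂ * a ^ (β - α) := by
    filter_upwards [Ioo_mem_nhdsGT one_pos] with a ⟨ha, ha1⟩
    rw [Real.rpow_sub ha, ← mul_div_assoc, le_div_iff₀ (Real.rpow_pos_of_pos ha α)]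
    linarith [h a ha ha1]
  exact (ge_of_tendsto hlim hle).not_gt hc₁

theorem stmt_3 (n : ℕ) (hn : 1 ≤ n) (p : ℝ) (hp : 1 ≤ p) :
    ∃ C₁ C₂ : ℝ, 0 < C₁ ∧ 0 < C₂ ∧
      (∀ a : ℝ, 0 < a → a < 1 →
        (∫ x in {x : EuclideanSpace ℝ (Fin n) | (∀ i, 0 ≤ x i) ∧ ∑ i, x i ≤ 1},
            (max (1 - (∑ i, x i) / a) 0) ^ p) ^ (1 / p) = a ^ ((n : ℝ) / p) * C₁ ∧
        (∑ j : Fin n, ∫ x in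
            {x : EuclideanSpace ℝ (Fin n) | (∀ i, 0 ≤ x i) ∧ ∑ i, x i ≤ 1} ∩ {x | x j = 0},
            max (1 - (∑ i, x i) / a) 0 ∂(μH[(n : ℝ) - 1])) = a ^ (n - 1) * C₂) ∧
      (2 < n → ¬ ∃ C : ℝ, ∀ a : ℝ, 0 < a → a < 1 →
        (∫ x in {x : EuclideanSpace ℝ (Fin n) | (∀ i, 0 ≤ x i) ∧ ∑ i, x i ≤ 1},
            (max (1 - (∑ i, x i) / a) 0) ^ (2 : ℝ)) ^ (1 / (2 : ℝ)) ≤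
          C * ∑ j : Fin n, ∫ x in
            {x : EuclideanSpace ℝ (Fin n) | (∀ i, 0 ≤ x i) ∧ ∑ i, x i ≤ 1} ∩ {x | x j = 0},
            max (1 - (∑ i, x i) / a) 0 ∂(μH[(n : ℝ) - 1])) := by
  obtain ⟨m, rfl⟩ : ∃ m, n = m + 1 := ⟨n - 1, by omega⟩
  rw [show ((m + 1 : ℕ) : ℝ) - 1 = m by push_cast; ring, Nat.add_sub_cancel]
  set C₂ := (m + 1 : ℝ) * ∫ y in solidSimplex m, tent 1 (∑ i, y i) ∂μH[(m : ℝ)]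
  have hC₁ : ∀ q : ℝ, 0 ≤ q →
      0 < (∫ x in solidSimplex (m + 1), tent 1 (∑ i, x i) ^ q) ^ (1 / q) := fun q hq =>
    Real.rpow_pos_of_pos (setIntegral_solidSimplex_tent_rpow_pos volume hq) _
  have hC₂ : 0 < C₂ := mul_pos (by positivity) <| by
    simpa using setIntegral_solidSimplex_tent_rpow_pos μH[(m : ℝ)] zero_le_one
  refine ⟨_, C₂, hC₁ p (by linarith), hC₂, fun a ha ha1 =>
    ⟨rpow_inv_setIntegral_solidSimplex_tent (by linarith) ha ha1.le,
      sum_setIntegral_faces_tent ha ha1.le⟩, fun hn2 ⟨C, hC⟩ => ?_⟩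
  have hexp : ((m + 1 : ℕ) : ℝ) / 2 < m := by
    have : (2 : ℝ) < m + 1 := by exact_mod_cast hn2
    push_cast
    linarith
  refine not_forall_rpow_mul_le_of_lt (C := C) (c₂ := C₂) (hC₁ 2 zero_le_two) hexp fun a ha ha1 => ?_
  rw [← rpow_inv_setIntegral_solidSimplex_tent two_pos ha ha1.le, Real.rpow_natCast,
    ← sum_setIntegral_faces_tent ha ha1.le]
  exact hC a ha ha1
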